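/- Let G = F_{s1} × F_{s2} be the direct product of two free groups with standard generating set X of size s = s1 + s2 (the free generators of the two factors embedded in the product), and let φ: G → G be the automorphism sending each generator in X to its inverse. For every n ≥ 1, the map sending a pair (S, z), where S = (x_1, …, x_{2n}) is a bad valid string of length 2n and z ∈ X with z ≠ x_1 and z ≠ x_{2n}, to the string (z, φ-conjugated S, z) = (z, x_1, x_2, …, x_{2n}, z) interpreted as the valid string of length 2n+2 whose alternating product is z^{-1} φ(x_1^{-1} x_2 ⋯ x_{2n−1}^{-1} x_{2n}) z, is an injection into the set of bad valid strings of length 2n + 2; consequently b_{2n+2} ≥ (s − 2) b_{2n}. -/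

import Mathlib

/-- The alternating product `x_1⁻¹ x_2 x_3⁻¹ x_4 ⋯ x_{2n-1}⁻¹ x_{2n}` associated to a
string `(x_1, …, x_{2n})` of group elements. -/
def altProd {G : Type*} [Group G] {n : ℕ} (x : Fin (2 * n) → G) : G :=
  (List.ofFn fun i : Fin n =>
    (x ⟨2 * i.val, by have := i.isLt; omega⟩)⁻¹ *
      x ⟨2 * i.val + 1, by have := i.isLt; omega⟩).prod

lemma altProd_zero {G : Type*} [Group G] (x : Fin (2 * 0) → G) : altProd x = 1 := by
  simp [altProd]

lemma consSnoc_apply {G : Type*} {m : ℕ} (u v : G) (x : Fin m → G) (k : ℕ) (hk : k < m + 2) :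
    (Fin.cons u (Fin.snoc x v) : Fin (m + 2) → G) ⟨k, hk⟩ =
      if h0 : k = 0 then u else if h : k - 1 < m then x ⟨k - 1, h⟩ else v := by
  cases k with
  | zero => simp [Fin.cons_zero]
  | succ k =>
    have h1 : (⟨k+1, hk⟩ : Fin (m+2)) = Fin.succ ⟨k, by omega⟩ := rfl
    rw [h1, Fin.cons_succ]
    by_cases h : k < m
    · have h2 : (⟨k, by omega⟩ : Fin (m+1)) = Fin.castSucc ⟨k, h⟩ := rfl
      rw [h2, Fin.snoc_castSucc]
      simp [h]
    · have hk' : k = m := by omega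
      have h2 : (⟨k, by omega⟩ : Fin (m+1)) = Fin.last m := by
        ext; simpa using hk'
      rw [h2, Fin.snoc_last]
      simp [hk']

lemma altProd_front {G : Type*} [Group G] {n : ℕ} (x : Fin (2 * (n + 1)) → G) :
    altProd x = (x ⟨0, by omega⟩)⁻¹ * x ⟨1, by omega⟩ *
      altProd (fun i : Fin (2 * n) => x ⟨i.val + 2, by have := i.isLt; omega⟩) := by
  simp only [altProd]
  rw [List.ofFn_succ, List.prod_cons]
  rfl

lemma key_conj {G : Type*} [Group G] (φ : G →* G) : ∀ {n : ℕ} (x : Fin (2 * n) → G),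
    (∀ i, φ (x i) = (x i)⁻¹) → ∀ u v : G,
    altProd (n := n + 1) (Fin.cons u (Fin.snoc x v)) = u⁻¹ * φ (altProd x) * v := by
  intro n
  induction n with
  | zero =>
    intro x hx u v
    have h1 : altProd (n := 0 + 1) (Fin.cons u (Fin.snoc x v)) = u⁻¹ * v := by
      simp [altProd]
      rfl
    rw [h1, altProd_zero x]
    simp
  | succ n ih =>
    intro x hx u v
    set x' : Fin (2 * n) → G := fun i => x ⟨i.val + 2, by have := i.isLt; omega⟩ with hx'
    have hY : (fun i : Fin (2 * (n + 1)) =>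
        (Fin.cons u (Fin.snoc x v) : Fin (2 * (n + 2)) → G)
          ⟨i.val + 2, by have := i.isLt; simp only [Nat.mul_eq] at *; omega⟩)
        = Fin.cons (x ⟨1, by omega⟩) (Fin.snoc x' v) := by
      funext i
      rcases i with ⟨iv, hiv⟩
      have hi : iv < 2 * n + 2 := lt_of_lt_of_eq hiv (by ring)
      rw [consSnoc_apply u v x (iv + 2) (by omega),
        consSnoc_apply (x ⟨1, by omega⟩) v x' iv (by omega)]
      rcases Nat.eq_zero_or_pos iv with h0 | h0
      · subst h0
        rw [dif_neg (by omega), dif_pos (by omega), dif_pos (by omega)]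
      · by_cases h1 : iv - 1 < 2 * n
        · rw [dif_neg (by omega), dif_pos (by omega), dif_neg (by omega), dif_pos h1]
          simp only [hx']
          congr 1
          ext
          simp
          omega
        · rw [dif_neg (by omega), dif_neg (by omega), dif_neg (by omega), dif_neg h1]
    have hfront := altProd_front (n := n + 1) (Fin.cons u (Fin.snoc x v))
    rw [hY] at hfront
    have h0 : (Fin.cons u (Fin.snoc x v) : Fin (2 * (n + 2)) → G) ⟨0, by omega⟩ = u := rfl
    have h1 : (Fin.cons u (Fin.snoc x v) : Fin (2 * (n + 2)) → G) ⟨1, by omega⟩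
        = x ⟨0, by omega⟩ := by
      rw [consSnoc_apply u v x 1 (by omega)]
      simp
    rw [h0, h1] at hfront
    rw [hfront, ih x' (fun i => hx _) (x ⟨1, by omega⟩) v]
    rw [altProd_front x]
    simp only [map_mul, map_inv, hx ⟨0, by omega⟩, hx ⟨1, by omega⟩, ← hx']
    group

/-- A bad valid string of length `2n` over `X ⊆ G`: a sequence of elements of `X` with
adjacent entries distinct whose alternating product is the identity. -/
def IsBadValid {G : Type*} [Group G] (X : Set G) {n : ℕ} (S : Fin (2 * n) → G) : Prop :=
  (∀ i, S i ∈ X) ∧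
  (∀ (i : ℕ) (h : i + 1 < 2 * n), S ⟨i, by omega⟩ ≠ S ⟨i + 1, h⟩) ∧
  altProd S = 1

/-- The automorphism of `F_{s1} × F_{s2}` sending each standard generator to its
inverse. -/
def genInv (α β : Type*) : FreeGroup α × FreeGroup β →* FreeGroup α × FreeGroup β :=
  MonoidHom.prodMap (FreeGroup.lift fun a => (FreeGroup.of a)⁻¹)
    (FreeGroup.lift fun b => (FreeGroup.of b)⁻¹)

/-- Let `G = F_{s1} × F_{s2}` with standard generating set `X` of size
`s = s1 + s2`, and let `φ` be the automorphism sending each generator to its inverse.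
For every `n ≥ 1`, the map sending a pair `(S, z)`, with `S` a bad valid string of
length `2n` and `z ∈ X`, `z ≠ x_1`, `z ≠ x_{2n}`, to the string
`(z, x_1, …, x_{2n}, z)` of length `2n+2` — whose alternating product is
`z⁻¹ φ(x_1⁻¹ x_2 ⋯ x_{2n-1}⁻¹ x_{2n}) z` — is an injection into the set of bad valid
strings of length `2n+2`; consequently `b_{2n+2} ≥ (s - 2) b_{2n}`. -/
theorem bad_string_conjugation_injection (s1 s2 : ℕ) (n : ℕ) (hn : 1 ≤ n) :
    let G := FreeGroup (Fin s1) × FreeGroup (Fin s2)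
    let ea : Fin s1 → G := fun a => (FreeGroup.of a, 1)
    let eb : Fin s2 → G := fun b => (1, FreeGroup.of b)
    let X : Set G := Set.range ea ∪ Set.range eb
    -- φ sends each generator in X to its inverse
    (∀ g ∈ X, genInv (Fin s1) (Fin s2) g = g⁻¹) ∧
    -- the extended string is a bad valid string of length 2n+2, with alternating
    -- product z⁻¹ φ(altProd S) z
    (∀ (S : Fin (2 * n) → G), IsBadValid X S →
      ∀ z ∈ X, z ≠ S ⟨0, by omega⟩ → z ≠ S ⟨2 * n - 1, by omega⟩ →
        altProd (n := n + 1) (Fin.cons z (Fin.snoc S z)) =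
            z⁻¹ * genInv (Fin s1) (Fin s2) (altProd S) * z ∧
          IsBadValid (n := n + 1) X (Fin.cons z (Fin.snoc S z))) ∧
    -- the map (S, z) ↦ (z, x_1, …, x_{2n}, z) is injective
    (∀ (S S' : Fin (2 * n) → G) (z z' : G),
      (Fin.cons z (Fin.snoc S z) : Fin (2 * (n + 1)) → G) =
        Fin.cons z' (Fin.snoc S' z') → S = S' ∧ z = z') ∧
    -- consequently b_{2n+2} ≥ (s - 2) b_{2n}
    (s1 + s2 - 2) * Nat.card {S : Fin (2 * n) → G // IsBadValid X S} ≤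
      Nat.card {S : Fin (2 * (n + 1)) → G // IsBadValid X S} := by
  intro G ea eb X
  -- φ inverts generators
  have hphi : ∀ g ∈ X, genInv (Fin s1) (Fin s2) g = g⁻¹ := by
    rintro g (⟨a, rfl⟩ | ⟨b, rfl⟩)
    · show genInv (Fin s1) (Fin s2) ((FreeGroup.of a, 1) : FreeGroup (Fin s1) × FreeGroup (Fin s2))
        = ((FreeGroup.of a, 1) : FreeGroup (Fin s1) × FreeGroup (Fin s2))⁻¹
      simp [genInv, Prod.ext_iff]
    · show genInv (Fin s1) (Fin s2) ((1, FreeGroup.of b) : FreeGroup (Fin s1) × FreeGroup (Fin s2))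
        = ((1, FreeGroup.of b) : FreeGroup (Fin s1) × FreeGroup (Fin s2))⁻¹
      simp [genInv, Prod.ext_iff]
  -- part 2
  have part2 : ∀ (S : Fin (2 * n) → G), IsBadValid X S →
      ∀ z ∈ X, z ≠ S ⟨0, by omega⟩ → z ≠ S ⟨2 * n - 1, by omega⟩ →
        altProd (n := n + 1) (Fin.cons z (Fin.snoc S z)) =
            z⁻¹ * genInv (Fin s1) (Fin s2) (altProd S) * z ∧
          IsBadValid (n := n + 1) X (Fin.cons z (Fin.snoc S z)) := by
    intro S hS z hz hz0 hzl
    have h1 := key_conj (genInv (Fin s1) (Fin s2)) S (fun i => hphi (S i) (hS.1 i)) z z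
    refine ⟨h1, ?_, ?_, ?_⟩
    · rintro ⟨iv, hiv⟩
      rw [consSnoc_apply z z S iv (by have := hiv; simp only [Nat.mul_eq] at *; omega)]
      split_ifs with h0 hm
      · exact hz
      · exact hS.1 _
      · exact hz
    · intro i h
      have h' : i + 1 < 2 * n + 2 := by simp only [Nat.mul_eq] at *; omega
      rw [consSnoc_apply z z S i (by omega), consSnoc_apply z z S (i+1) (by omega)]
      rcases Nat.eq_zero_or_pos i with h0 | h0
      · subst h0
        rw [dif_pos rfl, dif_neg (by omega), dif_pos (by omega)]
        exact hz0
      · by_cases h1' : i < 2 * n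
        · rw [dif_neg (by omega), dif_pos (by omega), dif_neg (by omega), dif_pos (by omega)]
          have := hS.2.1 (i - 1) (by omega)
          have e : (⟨i - 1 + 1, by omega⟩ : Fin (2 * n)) = ⟨i + 1 - 1, by omega⟩ := by
            rw [Fin.mk.injEq]; omega
          rwa [e] at this
        · have hieq : i = 2 * n := by omega
          rw [dif_neg (by omega), dif_pos (by omega), dif_neg (by omega),
            dif_neg (by omega)]
          have e : (⟨i - 1, by omega⟩ : Fin (2 * n)) = ⟨2 * n - 1, by omega⟩ := by
            rw [Fin.mk.injEq]; omega
          rw [e]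
          exact hzl.symm
    · rw [h1, hS.2.2]
      simp
  have part3 : ∀ (S S' : Fin (2 * n) → G) (z z' : G),
      (Fin.cons z (Fin.snoc S z) : Fin (2 * (n + 1)) → G) =
        Fin.cons z' (Fin.snoc S' z') → S = S' ∧ z = z' := by
    intro S S' z z' h
    constructor
    · funext i
      have h2 := congrFun h ⟨i.val + 1, by have := i.isLt; simp only [Nat.mul_eq] at *; omega⟩
      rw [consSnoc_apply z z S (i.val + 1) (by have := i.isLt; omega),
        consSnoc_apply z' z' S' (i.val + 1) (by have := i.isLt; omega)] at h2
      have hi := i.isLt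
      rw [dif_neg (by omega), dif_pos (by omega), dif_neg (by omega), dif_pos (by omega)] at h2
      simpa using h2
    · simpa using congrFun h 0
  refine ⟨hphi, part2, part3, ?_⟩
  -- part 4
  classical
  have hea : Function.Injective ea := fun a b h => by
    have := congrArg Prod.fst h
    exact FreeGroup.of_injective this
  have heb : Function.Injective eb := fun a b h => by
    have := congrArg Prod.snd h
    exact FreeGroup.of_injective this
  have hXfin : X.Finite := (Set.finite_range ea).union (Set.finite_range eb)
  haveI hXsub : Finite ↥X := hXfin.to_subtype
  have hbadfin : ∀ m : ℕ, Finite {S : Fin (2 * m) → G // IsBadValid X S} := by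
    intro m
    have hinj : Function.Injective (fun S : {S : Fin (2 * m) → G // IsBadValid X S} =>
        (fun i => (⟨S.1 i, S.2.1 i⟩ : X) : Fin (2 * m) → X)) := by
      intro S T h
      apply Subtype.ext; funext i
      exact congrArg Subtype.val (congrFun h i)
    exact Finite.of_injective _ hinj
  haveI hf1 : Finite {S : Fin (2 * n) → G // IsBadValid X S} := hbadfin n
  haveI hf2 : Finite {S : Fin (2 * (n + 1)) → G // IsBadValid X S} := hbadfin (n + 1)
  have hcardX : s1 + s2 ≤ X.ncard := by
    have hdisj : Disjoint (Set.range ea) (Set.range eb) := by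
      rw [Set.disjoint_left]
      rintro g ⟨a, rfl⟩ ⟨b, hb⟩
      exact FreeGroup.of_ne_one a (congrArg Prod.fst hb).symm
    have h1 : (Set.range ea).ncard = s1 := by
      rw [← Nat.card_coe_set_eq, Nat.card_range_of_injective hea,
        Nat.card_eq_fintype_card, Fintype.card_fin]
    have h2 : (Set.range eb).ncard = s2 := by
      rw [← Nat.card_coe_set_eq, Nat.card_range_of_injective heb,
        Nat.card_eq_fintype_card, Fintype.card_fin]
    show s1 + s2 ≤ (Set.range ea ∪ Set.range eb).ncard
    rw [Set.ncard_union_eq hdisj (Set.finite_range ea) (Set.finite_range eb), h1, h2]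
  set Zset : {S : Fin (2 * n) → G // IsBadValid X S} → Set G := fun S =>
    {z | z ∈ X ∧ z ≠ S.1 ⟨0, by omega⟩ ∧ z ≠ S.1 ⟨2 * n - 1, by omega⟩} with hZset
  have hZfin : ∀ S, (Zset S).Finite := fun S => hXfin.subset (fun z hz => hz.1)
  haveI : ∀ S, Finite ↥(Zset S) := fun S => (hZfin S).to_subtype
  have hz2 : ∀ S, s1 + s2 - 2 ≤ Nat.card ↥(Zset S) := by
    intro S
    set a0 := S.1 ⟨0, by omega⟩
    set b0 := S.1 ⟨2 * n - 1, by omega⟩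
    have hsub1 : X \ {a0, b0} ⊆ Zset S := by
      rintro z ⟨hzX, hz'⟩
      simp only [Set.mem_insert_iff, Set.mem_singleton_iff, not_or] at hz'
      exact ⟨hzX, hz'.1, hz'.2⟩
    have hXle : X.ncard ≤ (X \ {a0, b0}).ncard + 2 := by
      have hsub : X ⊆ (X \ {a0, b0}) ∪ {a0, b0} := by
        intro x hx
        by_cases hx' : x ∈ ({a0, b0} : Set G)
        · exact Or.inr hx'
        · exact Or.inl ⟨hx, hx'⟩
      have c1 : X.ncard ≤ ((X \ {a0, b0}) ∪ {a0, b0}).ncard :=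
        Set.ncard_le_ncard hsub ((hXfin.diff).union
          ((Set.finite_singleton b0).insert a0))
      have c2 := Set.ncard_union_le (X \ {a0, b0}) ({a0, b0} : Set G)
      have c3 := Set.ncard_insert_le a0 ({b0} : Set G)
      have c4 := Set.ncard_singleton b0
      omega
    have hmono : (X \ {a0, b0}).ncard ≤ (Zset S).ncard :=
      Set.ncard_le_ncard hsub1 (hZfin S)
    have hcoe : Nat.card ↥(Zset S) = (Zset S).ncard := Nat.card_coe_set_eq _
    omega
  letI : Fintype {S : Fin (2 * n) → G // IsBadValid X S} := Fintype.ofFinite _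
  letI : ∀ S, Fintype ↥(Zset S) := fun S => Fintype.ofFinite _
  have hinj : Function.Injective
      (fun p : Σ S : {S : Fin (2 * n) → G // IsBadValid X S}, ↥(Zset S) =>
        (⟨Fin.cons p.2.1 (Fin.snoc p.1.1 p.2.1),
          (part2 p.1.1 p.1.2 p.2.1 p.2.2.1 p.2.2.2.1 p.2.2.2.2).2⟩ :
          {S : Fin (2 * (n + 1)) → G // IsBadValid X S})) := by
    rintro ⟨⟨S, hSb⟩, ⟨z, hzb⟩⟩ ⟨⟨S', hSb'⟩, ⟨z', hzb'⟩⟩ h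
    have h' := congrArg Subtype.val h
    obtain ⟨hSS, hzz⟩ := part3 S S' z z' h'
    subst hSS; subst hzz; rfl
  have h4 := Nat.card_le_card_of_injective _ hinj
  calc (s1 + s2 - 2) * Nat.card {S : Fin (2 * n) → G // IsBadValid X S}
      = ∑ _S : {S : Fin (2 * n) → G // IsBadValid X S}, (s1 + s2 - 2) := by
        rw [Finset.sum_const, Nat.card_eq_fintype_card, smul_eq_mul,
          Finset.card_univ, Nat.mul_comm]
    _ ≤ ∑ S : {S : Fin (2 * n) → G // IsBadValid X S}, Fintype.card ↥(Zset S) := by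
        refine Finset.sum_le_sum fun S _ => ?_
        have := hz2 S
        rwa [Nat.card_eq_fintype_card] at this
    _ = Fintype.card (Σ S : {S : Fin (2 * n) → G // IsBadValid X S}, ↥(Zset S)) :=
        (Fintype.card_sigma).symm
    _ = Nat.card (Σ S : {S : Fin (2 * n) → G // IsBadValid X S}, ↥(Zset S)) :=
        (Nat.card_eq_fintype_card).symm
    _ ≤ Nat.card {S : Fin (2 * (n + 1)) → G // IsBadValid X S} := h4
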